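/- For every nondegenerate interval I ⊆ (0,∞) containing 1, it is not the case that conj(v(t,k))·conj(v'(1,k)) − t·conj(v'(t,k))·conj(v(1,k)) = 0 for all t ∈ I and all k > 0; that is, there exist t ∈ I and k > 0 for which this expression is nonzero. (This is the key fact behind the non-unitary-implementability of the free time evolution: the conjugate-linear part of the transformed evolution Û₀(t,1) is a multiplication operator with exactly this multiplier, and a nonzero multiplication operator is never Hilbert–Schmidt.) -/

import Mathlib

open Complex MeasureTheory Filter
open scoped RealInnerProductSpace

noncomputable section

/-- Three-dimensional Euclidean space. -/
abbrev V3 : Type := EuclideanSpace ℝ (Fin 3)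

/-- The Bessel function of complex order `α`:
`J_α(x) = Σ_{n=0}^∞ ((−1)^n/(n!·Γ(α+n+1)))·exp((α+2n)·log(x/2))`. -/
def besselJ (α : ℂ) (x : ℝ) : ℂ :=
  ∑' n : ℕ, ((-1 : ℂ) ^ n / ((n.factorial : ℂ) * Complex.Gamma (α + (n : ℂ) + 1))) *
    Complex.exp ((α + 2 * (n : ℂ)) * (Real.log (x / 2) : ℂ))

/-- The Hankel function of the first kind. -/
def hankel1 (α : ℂ) (x : ℝ) : ℂ :=
  (besselJ (-α) x - Complex.exp (-(Complex.I * (Real.pi : ℂ) * α)) * besselJ α x) /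
    (Complex.I * Complex.sin (α * (Real.pi : ℂ)))

/-- The Hankel function of the second kind. -/
def hankel2 (α : ℂ) (x : ℝ) : ℂ :=
  (Complex.exp (Complex.I * (Real.pi : ℂ) * α) * besselJ α x - besselJ (-α) x) /
    (Complex.I * Complex.sin (α * (Real.pi : ℂ)))

/-- `μ = √((mR)² − 9/4)`. -/
def modeMu (m R : ℝ) : ℝ := Real.sqrt ((m * R) ^ 2 - 9 / 4)

/-- `ν = iμ`. -/
def modeNu (m R : ℝ) : ℂ := Complex.I * (modeMu m R : ℂ)

/-- The mode function `v(t,k) = e^{−μπ/2}·t^{3/2}·H^{(1)}_ν(kt)`. -/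
def modeV (m R t k : ℝ) : ℂ :=
  (Real.exp (-(modeMu m R * Real.pi / 2)) : ℂ) * ((t ^ ((3 : ℝ) / 2) : ℝ) : ℂ) *
    hankel1 (modeNu m R) (k * t)

/-- `v′(t,k) = ∂v/∂t (t,k)`. -/
def modeV' (m R t k : ℝ) : ℂ := deriv (fun s => modeV m R s k) t

/-- `ω(k) = √(1+k²)`. -/
def omegaK (k : ℝ) : ℝ := Real.sqrt (1 + k ^ 2)

/-- The Fourier transform on `ℝ³`. -/
def ft (g : V3 → ℂ) (k : V3) : ℂ :=
  (((2 * Real.pi) ^ (-(3 : ℝ) / 2) : ℝ) : ℂ) *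
    ∫ x : V3, Complex.exp (-(Complex.I) * (⟪k, x⟫ : ℂ)) * g x

/-- The inverse Fourier transform on `ℝ³`. -/
def ift (g : V3 → ℂ) (x : V3) : ℂ :=
  (((2 * Real.pi) ^ (-(3 : ℝ) / 2) : ℝ) : ℂ) *
    ∫ k : V3, Complex.exp (Complex.I * (⟪k, x⟫ : ℂ)) * g k

/-- The map `K_t` on the Fourier side, applied to the Fourier transforms `f̃, h̃`
of the Cauchy data:
`K_t(f,h)(k) = (πi/(4t³))·[t·f̃(k)·conj(v′(t,|k|)) − R·h̃(k)·conj(v(t,|k|))]`. -/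
def ktAux (m R t : ℝ) (ftil htil : V3 → ℂ) (k : V3) : ℂ :=
  ((Real.pi : ℂ) * Complex.I / (4 * (t : ℂ) ^ 3)) *
    ((t : ℂ) * ftil k * (starRingEnd ℂ) (modeV' m R t ‖k‖) -
      (R : ℂ) * htil k * (starRingEnd ℂ) (modeV m R t ‖k‖))

/-- `K_t` applied to real Cauchy data `(f,h)`. -/
def ktFun (m R t : ℝ) (f h : V3 → ℝ) : V3 → ℂ :=
  ktAux m R t (ft fun x => (f x : ℂ)) (ft fun x => (h x : ℂ))

/-- The Fourier transform of the first component of the pair `L_tψ`: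
`f̃_t(k) = v(t,|k|)·ψ(k) + conj(v(t,|k|))·conj(ψ(−k))`. -/
def ltF (m R t : ℝ) (ψ : V3 → ℂ) (k : V3) : ℂ :=
  modeV m R t ‖k‖ * ψ k + (starRingEnd ℂ) (modeV m R t ‖k‖) * (starRingEnd ℂ) (ψ (-k))

/-- The Fourier transform of the second component of the pair `L_tψ`:
`h̃_t(k) = (t/R)·[v′(t,|k|)·ψ(k) + conj(v′(t,|k|))·conj(ψ(−k))]`. -/
def ltH (m R t : ℝ) (ψ : V3 → ℂ) (k : V3) : ℂ :=
  ((t / R : ℝ) : ℂ) *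
    (modeV' m R t ‖k‖ * ψ k + (starRingEnd ℂ) (modeV' m R t ‖k‖) * (starRingEnd ℂ) (ψ (-k)))

/-- The solution `u(t,x⃗)` built from the coefficient function `ψ`:
`u(t,x⃗) = (2π)^{−3/2}·∫ e^{ik⃗·x⃗}·[v(t,|k⃗|)·ψ(k⃗) + conj(v(t,|k⃗|))·conj(ψ(−k⃗))] dk⃗`. -/
def uSol (m R : ℝ) (ψ : V3 → ℂ) (t : ℝ) (x : V3) : ℂ :=
  (((2 * Real.pi) ^ (-(3 : ℝ) / 2) : ℝ) : ℂ) *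
    ∫ k : V3, Complex.exp (Complex.I * (⟪k, x⟫ : ℂ)) *
      (modeV m R t ‖k‖ * ψ k + (starRingEnd ℂ) (modeV m R t ‖k‖) * (starRingEnd ℂ) (ψ (-k)))

/-- The spatial Laplacian, as the sum of the second partial derivatives along
the coordinate directions. -/
def lap3 (w : V3 → ℂ) (x : V3) : ℂ :=
  ∑ i : Fin 3, iteratedDeriv 2 (fun s : ℝ => w (x + s • EuclideanSpace.single i (1 : ℝ))) 0

/-- The square of the Sobolev-type norm `‖(f,h)‖_{1/2}`, expressed in terms of the
Fourier transforms `f̃, h̃` of the data: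
`‖(f,h)‖_{1/2}² = ∫ ω(|k⃗|)·|f̃(k⃗)|² dk⃗ + ∫ ω(|k⃗|)⁻¹·|h̃(k⃗)|² dk⃗`. -/
def halfNormSq (ftil htil : V3 → ℂ) : ℝ :=
  (∫ k : V3, omegaK ‖k‖ * ‖ftil k‖ ^ 2) + ∫ k : V3, (omegaK ‖k‖)⁻¹ * ‖htil k‖ ^ 2

/-- The Sobolev-type norm `‖(f,h)‖_{1/2}` (arguments are the Fourier transforms). -/
def halfNorm (ftil htil : V3 → ℂ) : ℝ := Real.sqrt (halfNormSq ftil htil)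

/-- The `L²(ℝ³)` norm. -/
def l2Norm (g : V3 → ℂ) : ℝ := Real.sqrt (∫ k : V3, ‖g k‖ ^ 2)

/-- The transformed potential operator `V̂` with (Fourier-transformed) potential `W`:
`(V̂ψ)(k⃗) = −(2π)^{3/2}·R·(πi/4)·conj(v(1,|k⃗|))·(W ∗ g_ψ)(k⃗)` where
`g_ψ(k⃗) = v(1,|k⃗|)·ψ(k⃗) + conj(v(1,|k⃗|))·conj(ψ(−k⃗))`. -/
def vHatOp (m R : ℝ) (W : V3 → ℂ) (ψ : V3 → ℂ) (k : V3) : ℂ :=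
  ((-((2 * Real.pi) ^ ((3 : ℝ) / 2)) * R : ℝ) : ℂ) * ((Real.pi : ℂ) * Complex.I / 4) *
    (starRingEnd ℂ) (modeV m R 1 ‖k‖) * ∫ y : V3, W y * ltF m R 1 ψ (k - y)

/-- The free transformed evolution `Û₀(a,b) = K₁ ∘ L_a ∘ K_b ∘ L₁` on `L²(ℝ³)`. -/
def u0Hat (m R a b : ℝ) (ψ : V3 → ℂ) : V3 → ℂ :=
  ktAux m R 1 (ltF m R a (ktAux m R b (ltF m R 1 ψ) (ltH m R 1 ψ)))
    (ltH m R a (ktAux m R b (ltF m R 1 ψ) (ltH m R 1 ψ)))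

/-- The inner chain `V̂(s)·V̂(s₂)···V̂(s_{j+1})·Û₀(s_{j+1},1)ψ` of the `n`-th Dyson term,
with the nested integrals `∫₁^{s}···` built in; `W s` is the spatial Fourier transform
of the potential at time `s`. -/
def dysonM (m R : ℝ) (W : ℝ → V3 → ℂ) : ℕ → ℝ → (V3 → ℂ) → V3 → ℂ
  | 0, s, ψ => vHatOp m R (W s) (u0Hat m R s 1 ψ)
  | j + 1, s, ψ => vHatOp m R (W s) fun k => ∫ r in Set.Ioc (1 : ℝ) s, dysonM m R W j r ψ k

/-- The `n`-th Dyson term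
`∫₁^t∫₁^{s₁}···∫₁^{s_{n−1}} Û₀(t,s₁)·V̂(s₁)···V̂(s_n)·Û₀(s_n,1)ψ ds_n···ds₁` (for `n ≥ 1`). -/
def dysonT (m R : ℝ) (W : ℝ → V3 → ℂ) (n : ℕ) (t : ℝ) (ψ : V3 → ℂ) : V3 → ℂ := fun k =>
  ∫ s in Set.Ioc (1 : ℝ) t, u0Hat m R t s (dysonM m R W (n - 1) s ψ) k

/-!
For `s, k > 0` the mode function splits as
`v(s,k) = a(k)·s^{3/2-ν}·g₋((ks/2)²) + b(k)·s^{3/2+ν}·g₊((ks/2)²)`, where `g_±` are the entire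
functions with `J_{±ν}(x) = (x/2)^{±ν}·g_±((x/2)²)` and `a(k), b(k)` are constants times the
unimodular phases `(k/2)^{∓ν}`. The expression `v(t)v′(1) − t·v′(t)v(1)` is quadratic in `v`:
its diagonal terms carry the oscillating phases `(k/2)^{∓2ν}` but vanish as `k → 0⁺`, while the
cross terms are phase free and tend to a nonzero multiple of `t^{3/2}(t^{-ν} − t^{ν})`. This limit
is nonzero unless `t^{2ν} = 1`, which holds for only countably many `t`, so not on all of `I`.
The multiplier of the statement is the complex conjugate of `v(t)v′(1) − t·v′(t)v(1)`.
-/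

open FormalMultilinearSeries Set Topology
open scoped Real

def besselCoeff (α : ℂ) (n : ℕ) : ℂ :=
  (-1) ^ n / ((n.factorial : ℂ) * Gamma (α + n + 1))

def besselEntire (α : ℂ) : ℂ → ℂ := ofScalarsSum (besselCoeff α)

section BesselEntire

variable {α : ℂ}

lemma one_le_re_add_nat_add_one (hα : 0 ≤ α.re) (n : ℕ) : 1 ≤ (α + n + 1).re := by
  simp only [add_re, natCast_re, one_re]
  linarith [n.cast_nonneg (α := ℝ)]

lemma Gamma_add_one_ne_zero (hα : 0 ≤ α.re) : Gamma (α + 1) ≠ 0 :=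
  Gamma_ne_zero_of_re_pos (by rw [add_re, one_re]; linarith)

lemma norm_Gamma_le_norm_Gamma_add_nat (hα : 0 ≤ α.re) (n : ℕ) :
    ‖Gamma (α + 1)‖ ≤ ‖Gamma (α + n + 1)‖ := by
  induction n with
  | zero => simp
  | succ n ih =>
    have hre := one_le_re_add_nat_add_one hα n
    have hne : α + n + 1 ≠ 0 := fun h => by norm_num [h] at hre
    calc ‖Gamma (α + 1)‖ ≤ 1 * ‖Gamma (α + n + 1)‖ := by rwa [one_mul]
      _ ≤ ‖α + n + 1‖ * ‖Gamma (α + n + 1)‖ := by gcongr; exact hre.trans (re_le_norm _)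
      _ = ‖Gamma (α + ↑(n + 1) + 1)‖ := by
        rw [← norm_mul, ← Gamma_add_one _ hne]; push_cast; ring_nf

lemma norm_besselCoeff_le (hα : 0 ≤ α.re) (n : ℕ) :
    ‖besselCoeff α n‖ ≤ ‖Gamma (α + 1)‖⁻¹ * (n.factorial : ℝ)⁻¹ := by
  have hG : 0 < ‖Gamma (α + 1)‖ := norm_pos_iff.2 (Gamma_add_one_ne_zero hα)
  rw [besselCoeff, norm_div, norm_pow, norm_neg, norm_one, one_pow, norm_mul, norm_natCast,
    one_div, mul_inv, mul_comm]
  gcongr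
  exact norm_Gamma_le_norm_Gamma_add_nat hα n

lemma radius_besselSeries (hα : 0 ≤ α.re) : (ofScalars ℂ (besselCoeff α)).radius = ⊤ := by
  refine radius_eq_top_of_summable_norm _ fun r => ?_
  refine Summable.of_nonneg_of_le (fun n => by positivity) (fun n => ?_)
    ((Real.summable_pow_div_factorial r).mul_left ‖Gamma (α + 1)‖⁻¹)
  rw [ofScalars_norm, div_eq_mul_inv, mul_comm ((r : ℝ) ^ n), ← mul_assoc]
  gcongr
  exact norm_besselCoeff_le hα n

lemma differentiable_besselEntire (hα : 0 ≤ α.re) : Differentiable ℂ (besselEntire α) := by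
  intro z
  have h := (ofScalars ℂ (besselCoeff α)).hasFPowerSeriesOnBall
    (by rw [radius_besselSeries hα]; exact ENNReal.zero_lt_top)
  exact (h.analyticAt_of_mem (by simp [radius_besselSeries hα])).differentiableAt

lemma besselEntire_zero : besselEntire α 0 = (Gamma (α + 1))⁻¹ := by
  simp [besselEntire, ofScalarsSum_zero, besselCoeff]

lemma besselEntire_zero_ne_zero (hα : 0 ≤ α.re) : besselEntire α 0 ≠ 0 := by
  rw [besselEntire_zero]
  exact inv_ne_zero (Gamma_add_one_ne_zero hα)

lemma besselJ_eq_exp_mul_besselEntire (α : ℂ) {x : ℝ} (hx : 0 < x) :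
    besselJ α x = exp (α * Real.log (x / 2)) * besselEntire α ((x / 2) ^ 2 : ℝ) := by
  rw [besselJ, besselEntire, ofScalars_sum_eq, ← tsum_mul_left]
  congr 1 with n
  have hx2 : exp (Real.log (x / 2)) = (x / 2 : ℝ) := by
    rw [← ofReal_exp, Real.exp_log (by positivity)]
  rw [show (α + 2 * n) * (Real.log (x / 2) : ℂ) =
      α * Real.log (x / 2) + n * (2 * Real.log (x / 2)) by ring,
    exp_add, exp_nat_mul, two_mul, exp_add, hx2, besselCoeff, smul_eq_mul]
  push_cast
  ring

end BesselEntire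

def powerMode (p : ℂ) (G : ℂ → ℂ) (k s : ℝ) : ℂ :=
  (s : ℂ) ^ p * G ((k * s / 2) ^ 2 : ℝ)

def powerModeDeriv (p : ℂ) (G : ℂ → ℂ) (k s : ℝ) : ℂ :=
  (s : ℂ) ^ (p - 1) *
    (p * G ((k * s / 2) ^ 2 : ℝ) + ((k * s) ^ 2 / 2 : ℝ) * deriv G ((k * s / 2) ^ 2 : ℝ))

def modePairing (p q : ℂ) (G H : ℂ → ℂ) (k t : ℝ) : ℂ :=
  powerMode p G k t * powerModeDeriv q H k 1 - t * powerModeDeriv p G k t * powerMode q H k 1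

section PowerMode

variable {p q : ℂ} {G H : ℂ → ℂ} {k s t : ℝ}

lemma cpow_eq_cpow_sub_one_mul {z : ℂ} (hz : z ≠ 0) (p : ℂ) : z ^ p = z ^ (p - 1) * z := by
  conv_lhs => rw [← sub_add_cancel p 1]
  rw [cpow_add _ _ hz, cpow_one]

lemma hasDerivAt_powerMode (hG : Differentiable ℂ G) (hs : 0 < s) :
    HasDerivAt (powerMode p G k) (powerModeDeriv p G k s) s := by
  have hpow : HasDerivAt (fun x : ℝ => (x : ℂ) ^ p) (p * (s : ℂ) ^ (p - 1)) s := by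
    simpa using ((hasDerivAt_id (s : ℂ)).cpow_const (ofReal_mem_slitPlane.2 hs)).comp_ofReal
  have hY : HasDerivAt (fun x : ℝ => (k * x / 2) ^ 2) (k ^ 2 * s / 2) s := by
    refine (((hasDerivAt_id' s).const_mul k).div_const 2).fun_pow 2 |>.congr_deriv ?_
    ring
  have hGY : HasDerivAt (fun x : ℝ => G ((k * x / 2) ^ 2 : ℝ))
      ((k ^ 2 * s / 2) • deriv G ((k * s / 2) ^ 2 : ℝ)) s :=
    (hG _).hasDerivAt.comp_ofReal.scomp s hY
  refine (hpow.fun_mul hGY).congr_deriv ?_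
  rw [powerModeDeriv, cpow_eq_cpow_sub_one_mul (ofReal_ne_zero.2 hs.ne') p, real_smul]
  push_cast
  ring

lemma continuous_powerMode (hG : Continuous G) (p : ℂ) (s : ℝ) :
    Continuous fun k => powerMode p G k s := by
  unfold powerMode; fun_prop

lemma continuous_powerModeDeriv (hG : Continuous G) (hG' : Continuous (deriv G)) (p : ℂ)
    (s : ℝ) :
    Continuous fun k => powerModeDeriv p G k s := by
  unfold powerModeDeriv; fun_prop

lemma modePairing_zero (ht : 0 < t) :
    modePairing p q G H 0 t = (t : ℂ) ^ p * ((q - p) * G 0 * H 0) := by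
  simp only [modePairing, powerMode, powerModeDeriv, zero_mul, zero_div, ne_eq,
    OfNat.ofNat_ne_zero, not_false_eq_true, zero_pow, ofReal_zero, add_zero,
    ofReal_one, one_cpow, one_mul]
  rw [cpow_eq_cpow_sub_one_mul (ofReal_ne_zero.2 ht.ne') p]
  ring

lemma tendsto_modePairing (hG : Differentiable ℂ G) (hH : Differentiable ℂ H) (ht : 0 < t) :
    Tendsto (fun k => modePairing p q G H k t) (𝓝 0)
      (𝓝 ((t : ℂ) ^ p * ((q - p) * G 0 * H 0))) := by
  rw [← modePairing_zero ht]
  have hG' := (hG.contDiff (n := 1)).continuous_deriv le_rfl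
  have hH' := (hH.contDiff (n := 1)).continuous_deriv le_rfl
  exact (((continuous_powerMode hG.continuous p t).mul
    (continuous_powerModeDeriv hH.continuous hH' q 1)).sub ((continuous_const.mul
      (continuous_powerModeDeriv hG.continuous hG' p t)).mul
        (continuous_powerMode hH.continuous q 1))).tendsto 0

lemma tendsto_modePairing_self (hG : Differentiable ℂ G) (ht : 0 < t) :
    Tendsto (fun k => modePairing p p G G k t) (𝓝 0) (𝓝 0) := by
  simpa using tendsto_modePairing (p := p) (q := p) hG hG ht

end PowerMode

section HankelModes

variable {p q : ℂ} {G H : ℂ → ℂ} {k s t : ℝ}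

lemma rpow_mul_besselJ_eq (α : ℂ) (r : ℝ) (hk : 0 < k) (hs : 0 < s) :
    ((s ^ r : ℝ) : ℂ) * besselJ α (k * s) =
      exp (α * Real.log (k / 2)) * powerMode (r + α) (besselEntire α) k s := by
  have hs' : (s : ℂ) ≠ 0 := ofReal_ne_zero.2 hs.ne'
  have hlog : Real.log (k * s / 2) = Real.log (k / 2) + Real.log s := by
    rw [mul_div_right_comm, Real.log_mul (by positivity) hs.ne']
  rw [besselJ_eq_exp_mul_besselEntire α (mul_pos hk hs), powerMode, hlog, ofReal_cpow hs.le,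
    cpow_add _ _ hs', cpow_def_of_ne_zero hs' α, ← ofReal_log hs.le]
  push_cast
  rw [mul_add, exp_add, mul_comm (Real.log s : ℂ) α]
  ring

lemma rpow_mul_hankel1_eq (α : ℂ) (r : ℝ) (hk : 0 < k) (hs : 0 < s) :
    ((s ^ r : ℝ) : ℂ) * hankel1 α (k * s) =
      (exp (α * Real.log (k / 2)))⁻¹ / (I * sin (α * π)) *
          powerMode (r - α) (besselEntire (-α)) k s -
        exp (-(I * π * α)) * exp (α * Real.log (k / 2)) / (I * sin (α * π)) *
          powerMode (r + α) (besselEntire α) k s := by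
  have hJ := rpow_mul_besselJ_eq (-α) r hk hs
  rw [neg_mul, exp_neg, ← sub_eq_add_neg] at hJ
  rw [hankel1, mul_div_assoc', mul_sub, hJ, mul_left_comm, rpow_mul_besselJ_eq α r hk hs]
  ring

lemma hasDerivAt_add_powerMode (hG : Differentiable ℂ G) (hH : Differentiable ℂ H) (a b : ℂ)
    (hs : 0 < s) :
    HasDerivAt (fun x => a * powerMode p G k x + b * powerMode q H k x)
      (a * powerModeDeriv p G k s + b * powerModeDeriv q H k s) s :=
  ((hasDerivAt_powerMode hG hs).const_mul a).add ((hasDerivAt_powerMode hH hs).const_mul b)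

lemma multiplier_eq_of_eq_powerMode {f : ℝ → ℂ} {a b : ℂ} (hG : Differentiable ℂ G)
    (hH : Differentiable ℂ H) (hf : ∀ s > 0, f s = a * powerMode p G k s + b * powerMode q H k s)
    (ht : 0 < t) :
    f t * deriv f 1 - t * deriv f t * f 1 =
      a ^ 2 * modePairing p p G G k t +
        a * b * (modePairing p q G H k t + modePairing q p H G k t) +
        b ^ 2 * modePairing q q H H k t := by
  have hderiv : ∀ s > 0, deriv f s = a * powerModeDeriv p G k s + b * powerModeDeriv q H k s :=
    fun s hs => ((hasDerivAt_add_powerMode hG hH a b hs).congr_of_eventuallyEq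
      (eventually_of_mem (Ioi_mem_nhds hs) hf)).deriv
  rw [hf t ht, hf 1 one_pos, hderiv t ht, hderiv 1 one_pos]
  simp only [modePairing]
  ring

end HankelModes

lemma exists_mem_cpow_ne_cpow {I : Set ℝ} (hI : I.OrdConnected) (hpos : I ⊆ Ioi 0)
    (hnd : ∃ a ∈ I, ∃ b ∈ I, a ≠ b) {p q : ℂ} (hpq : p ≠ q) :
    ∃ t ∈ I, (t : ℂ) ^ p ≠ (t : ℂ) ^ q := by
  obtain ⟨a, ha, b, hb, hab⟩ := hnd
  by_contra! h
  -- `t ^ p = t ^ q` pins `log t` to the lattice `2πiℤ / (p - q)`.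
  have hsub :
      uIcc a b ⊆ range fun n : ℤ => Real.exp (n * (2 * π * Complex.I) / (p - q)).re := by
    intro t ht
    have htI := hI.uIcc_subset ha hb ht
    have ht' : (t : ℂ) ≠ 0 := ofReal_ne_zero.2 (hpos htI).ne'
    obtain ⟨n, hn⟩ := exp_eq_exp_iff_exists_int.1 (by
      simpa only [cpow_def_of_ne_zero ht'] using h t htI)
    have hlog : n * (2 * π * Complex.I) / (p - q) = Real.log t := by
      rw [div_eq_iff (sub_ne_zero.2 hpq), ofReal_log (hpos htI).le]
      linear_combination -hn
    exact ⟨n, by simp only [hlog, ofReal_re, Real.exp_log (hpos htI)]⟩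
  have hcount := (countable_range _).mono hsub
  rw [uIcc, Cardinal.Real.Icc_countable_iff, sup_le_inf] at hcount
  exact hab hcount

def modeAmplitude (m R : ℝ) : ℂ :=
  Real.exp (-(modeMu m R * π / 2)) / (Complex.I * sin (modeNu m R * π))

def modePhase (m R k : ℝ) : ℂ := exp (modeNu m R * Real.log (k / 2))

def modeMultiplier (m R t k : ℝ) : ℂ :=
  modeV m R t k * modeV' m R 1 k - t * modeV' m R t k * modeV m R 1 k

section ModeFunction

variable {m R t k : ℝ}

local notation "ν" => modeNu m R
local notation "p₋" => ((3 / 2 : ℝ) : ℂ) - modeNu m R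
local notation "p₊" => ((3 / 2 : ℝ) : ℂ) + modeNu m R
local notation "J₋" => besselEntire (-modeNu m R)
local notation "J₊" => besselEntire (modeNu m R)
local notation "w" => exp (-(Complex.I * π * modeNu m R))

lemma starRingEnd_modeMultiplier (m R t k : ℝ) :
    starRingEnd ℂ (modeMultiplier m R t k) =
      starRingEnd ℂ (modeV m R t k) * starRingEnd ℂ (modeV' m R 1 k) -
        t * starRingEnd ℂ (modeV' m R t k) * starRingEnd ℂ (modeV m R 1 k) := by
  simp [modeMultiplier]

lemma modeNu_re (m R : ℝ) : (modeNu m R).re = 0 := by simp [modeNu]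

lemma modeNu_ne_zero (hμ : 0 < modeMu m R) : modeNu m R ≠ 0 :=
  mul_ne_zero Complex.I_ne_zero (ofReal_ne_zero.2 hμ.ne')

lemma modeAmplitude_ne_zero (hμ : 0 < modeMu m R) : modeAmplitude m R ≠ 0 := by
  refine div_ne_zero (ofReal_ne_zero.2 (Real.exp_pos _).ne') (mul_ne_zero Complex.I_ne_zero ?_)
  rw [Ne, sin_eq_zero_iff]
  rintro ⟨n, hn⟩
  have him := congrArg im hn
  simp only [modeNu, mul_im, I_re, ofReal_re, zero_mul, I_im, ofReal_im, mul_zero, one_mul,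
    intCast_re, intCast_im, zero_add, add_zero] at him
  exact mul_ne_zero hμ.ne' Real.pi_ne_zero him

lemma norm_modePhase (m R k : ℝ) : ‖modePhase m R k‖ = 1 := by
  simp [modePhase, norm_exp, modeNu]

lemma modeV_eq_powerMode (hk : 0 < k) {s : ℝ} (hs : 0 < s) :
    modeV m R s k =
      modeAmplitude m R * (modePhase m R k)⁻¹ * powerMode p₋ J₋ k s +
        -(modeAmplitude m R * w * modePhase m R k) * powerMode p₊ J₊ k s := by
  rw [modeV, mul_assoc, rpow_mul_hankel1_eq _ _ hk hs, modeAmplitude, modePhase]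
  ring

lemma modeMultiplier_eq (hk : 0 < k) (ht : 0 < t) :
    modeMultiplier m R t k =
      modeAmplitude m R ^ 2 * ((modePhase m R k)⁻¹ ^ 2 * modePairing p₋ p₋ J₋ J₋ k t) -
        modeAmplitude m R ^ 2 * w *
          (modePairing p₋ p₊ J₋ J₊ k t + modePairing p₊ p₋ J₊ J₋ k t) +
        (modeAmplitude m R * w) ^ 2 * (modePhase m R k ^ 2 * modePairing p₊ p₊ J₊ J₊ k t) := by
  have hre : 0 ≤ (modeNu m R).re := (modeNu_re m R).ge
  have hre' : 0 ≤ (-modeNu m R).re := by simp [modeNu_re]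
  rw [modeMultiplier, modeV', modeV', multiplier_eq_of_eq_powerMode
    (differentiable_besselEntire hre') (differentiable_besselEntire hre)
    (fun s hs => modeV_eq_powerMode hk hs) ht]
  have hZ : modePhase m R k ≠ 0 := exp_ne_zero _
  field_simp
  ring

lemma tendsto_modeMultiplier (ht : 0 < t) :
    Tendsto (modeMultiplier m R t) (𝓝[>] 0)
      (𝓝 (-(modeAmplitude m R ^ 2 * w) * (2 * ν * J₋ 0 * J₊ 0) *
        ((t : ℂ) ^ p₋ - (t : ℂ) ^ p₊))) := by
  have hJp := differentiable_besselEntire (modeNu_re m R).ge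
  have hJm := differentiable_besselEntire (α := -modeNu m R) (by simp [modeNu_re])
  have hdiag : ∀ {u : ℝ → ℂ} {p : ℂ} {G : ℂ → ℂ}, (∀ k, ‖u k‖ = 1) → Differentiable ℂ G →
      Tendsto (fun k => u k * modePairing p p G G k t) (𝓝[>] 0) (𝓝 0) := fun hu hG =>
    isBoundedUnder_le_mul_tendsto_zero (isBoundedUnder_of ⟨1, fun k => (hu k).le⟩)
      ((tendsto_modePairing_self hG ht).mono_left nhdsWithin_le_nhds)
  have hcross := ((tendsto_modePairing (p := p₋) (q := p₊) hJm hJp ht).add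
    (tendsto_modePairing (p := p₊) (q := p₋) hJp hJm ht)).mono_left
      (nhdsWithin_le_nhds (s := Ioi 0))
  have hminus := hdiag (u := fun k => (modePhase m R k)⁻¹ ^ 2) (p := p₋)
    (by simp [norm_modePhase]) hJm
  have hplus := hdiag (u := fun k => modePhase m R k ^ 2) (p := p₊) (by simp [norm_modePhase]) hJp
  have hlim := ((hminus.const_mul (modeAmplitude m R ^ 2)).sub
    (hcross.const_mul (modeAmplitude m R ^ 2 * w))).add
      (hplus.const_mul ((modeAmplitude m R * w) ^ 2))
  convert hlim.congr' ?_ using 2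
  · ring
  · filter_upwards [self_mem_nhdsWithin] with k hk
    exact (modeMultiplier_eq hk ht).symm

end ModeFunction

theorem multiplier_not_identically_zero_general (m R : ℝ)
    (hmR : 3 / 2 < m * R) (I : Set ℝ) (hIconn : I.OrdConnected) (hIsub : I ⊆ Set.Ioi (0 : ℝ))
    (hnd : ∃ a ∈ I, ∃ b ∈ I, a ≠ b) :
    ∃ t ∈ I, ∃ k : ℝ, 0 < k ∧
      (starRingEnd ℂ) (modeV m R t k) * (starRingEnd ℂ) (modeV' m R 1 k) -
        (t : ℂ) * (starRingEnd ℂ) (modeV' m R t k) * (starRingEnd ℂ) (modeV m R 1 k) ≠ 0 := by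
  have hμ : 0 < modeMu m R := Real.sqrt_pos.2 (by nlinarith)
  have hν : modeNu m R ≠ 0 := modeNu_ne_zero hμ
  obtain ⟨t, htI, hpow⟩ := exists_mem_cpow_ne_cpow hIconn hIsub hnd
    (p := ((3 / 2 : ℝ) : ℂ) - modeNu m R) (q := ((3 / 2 : ℝ) : ℂ) + modeNu m R)
    (by intro h; apply hν; linear_combination -h / 2)
  refine ⟨t, htI, ?_⟩
  by_contra! hzero
  have hvanish : Tendsto (modeMultiplier m R t) (𝓝[>] 0) (𝓝 0) :=
    tendsto_const_nhds.congr' <| eventually_nhdsWithin_of_forall fun k hk =>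
      ((map_eq_zero _).1 ((starRingEnd_modeMultiplier m R t k).trans (hzero k hk))).symm
  have hlim := tendsto_nhds_unique (tendsto_modeMultiplier (m := m) (R := R) (hIsub htI)) hvanish
  push_cast at hpow
  simp [modeAmplitude_ne_zero hμ, hν, sub_eq_zero, hpow, besselEntire_zero_ne_zero,
    modeNu_re] at hlim

/-- on no nondegenerate interval `I ⊆ (0,∞)` containing `1` does the
multiplier `conj(v(t,k))·conj(v′(1,k)) − t·conj(v′(t,k))·conj(v(1,k))` vanish identically:
there exist `t ∈ I` and `k > 0` where it is nonzero. -/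
theorem multiplier_not_identically_zero (m R : ℝ) (hm : 0 < m) (hR : 0 < R)
    (hmR : 3 / 2 < m * R) (I : Set ℝ) (hIconn : I.OrdConnected) (hIsub : I ⊆ Set.Ioi (0 : ℝ))
    (h1I : (1 : ℝ) ∈ I) (hnd : ∃ a ∈ I, ∃ b ∈ I, a ≠ b) :
    ∃ t ∈ I, ∃ k : ℝ, 0 < k ∧
      (starRingEnd ℂ) (modeV m R t k) * (starRingEnd ℂ) (modeV' m R 1 k) -
        (t : ℂ) * (starRingEnd ℂ) (modeV' m R t k) * (starRingEnd ℂ) (modeV m R 1 k) ≠ 0 :=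
  multiplier_not_identically_zero_general m R hmR I hIconn hIsub hnd
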